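/- arXiv:2112.09305 — 6 statements merged into one kernel-verified Lean document; each statement's English description precedes it below -/
import Mathlib

section
/- HSIC with the Euclidean kernel equals -2 times HSIC with the linear kernel: for any N×N matrix L, tr(H·K_E·H·L) = -2·tr(H·K_lin·H·L), where K_E and K_lin are the Euclidean and linear Gram matrices of a feature matrix X. -/
open Matrix

/-- The centering matrix `H = I_N - (1/N)·𝟙𝟙ᵀ`. -/
noncomputable def centeringMatrix (N : ℕ) : Matrix (Fin N) (Fin N) ℝ :=
  1 - (N : ℝ)⁻¹ • Matrix.of (fun _ _ => (1 : ℝ))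

lemma centeringMatrix_row_sum (N : ℕ) (hN : 0 < N) (i : Fin N) :
    ∑ a, centeringMatrix N i a = 0 := by
  simp only [centeringMatrix, Matrix.sub_apply, Matrix.one_apply, Matrix.smul_apply,
    Matrix.of_apply, smul_eq_mul, mul_one, Finset.sum_sub_distrib]
  rw [Finset.sum_ite_eq Finset.univ i (fun _ => (1:ℝ))]
  simp [Finset.card_univ, hN.ne', mul_inv_cancel₀]

/-- `HSIC` with the Euclidean kernel equals `-2` times `HSIC` with the linear
kernel: `tr(HK_E·HL) = -2·tr(HK_lin·HL)`. -/
theorem hsic_euclidean_eq_neg_two_hsic_linear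
    (N p : ℕ) (hN : 0 < N) (x : Fin N → Fin p → ℝ)
    (KE Klin L : Matrix (Fin N) (Fin N) ℝ)
    (hKE : ∀ i j, KE i j = ∑ k, (x i k - x j k) ^ 2)
    (hKlin : ∀ i j, Klin i j = ∑ k, x i k * x j k) :
    Matrix.trace ((centeringMatrix N * KE) * (centeringMatrix N * L))
      = -2 * Matrix.trace ((centeringMatrix N * Klin) * (centeringMatrix N * L)) := by
  set H := centeringMatrix N with hH
  set d : Fin N → ℝ := fun i => ∑ k, x i k ^ 2 with hd
  have hrow : ∀ i : Fin N, ∑ a, H i a = 0 := centeringMatrix_row_sum N hN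
  -- KE decomposition entrywise
  have hKE2 : ∀ i j, KE i j = d i + d j - 2 * Klin i j := by
    intro i j
    rw [hKE, hKlin]
    simp only [hd]
    rw [Finset.mul_sum, ← Finset.sum_add_distrib, ← Finset.sum_sub_distrib]
    apply Finset.sum_congr rfl
    intro k _
    ring
  -- H * KE = C - 2 • (H * Klin), where C i j = (H.mulVec d) i
  have hHKE : H * KE = (Matrix.of fun i _ => ∑ a, H i a * d a) - (2 : ℝ) • (H * Klin) := by
    ext i j
    simp only [Matrix.mul_apply, Matrix.sub_apply, Matrix.smul_apply, Matrix.of_apply,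
      smul_eq_mul]
    have step : ∀ a, H i a * KE a j
        = H i a * d a + d j * H i a - 2 * (H i a * Klin a j) := by
      intro a; rw [hKE2 a j]; ring
    simp_rw [step]
    rw [Finset.sum_sub_distrib, Finset.sum_add_distrib, ← Finset.mul_sum, hrow i,
      ← Finset.mul_sum]
    ring
  rw [hHKE, Matrix.sub_mul, Matrix.smul_mul, Matrix.trace_sub, Matrix.trace_smul]
  -- trace(C * (H*L)) = 0 since column sums of H*L vanish
  have hcol : ∀ i : Fin N, ∑ j, (H * L) j i = 0 := by
    intro i
    simp only [Matrix.mul_apply]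
    rw [Finset.sum_comm]
    have : ∀ a : Fin N, ∑ j, H j a * L a i = 0 := by
      intro a
      rw [← Finset.sum_mul]
      have : ∑ j, H j a = 0 := by
        have : ∀ j b, H j b = H b j := by
          intro j b
          simp [hH, centeringMatrix, Matrix.one_apply, eq_comm]
        simp_rw [this]
        exact hrow a
      rw [this, zero_mul]
    simp [this]
  have hC : Matrix.trace ((Matrix.of fun i _ => ∑ a, H i a * d a) * (H * L)) = 0 := by
    simp only [Matrix.trace, Matrix.diag, Matrix.mul_apply, Matrix.of_apply]
    rw [Finset.sum_comm]
    calc ∑ j, ∑ i, (∑ a, H i a * d a) * (H * L) j i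
        = ∑ i, (∑ a, H i a * d a) * ∑ j, (H * L) j i := by
          rw [Finset.sum_comm]
          exact Finset.sum_congr rfl fun i _ => (Finset.mul_sum _ _ _).symm
      _ = 0 := by simp [hcol]
  rw [hC]
  simp only [smul_eq_mul, zero_sub]
  ring
end

section
/- The column-centered Gaussian Gram matrix converges entrywise to zero as the bandwidth tends to infinity, with the leading term given by the centered negative scaled squared-distance matrix: (H·K_{G(σ)})ᵢⱼ = -αᵢⱼ²/(2σ²) + (1/(Nσ²))·∑ₖ αₖⱼ²/2 + O(1/σ⁴) as σ → ∞, where αᵢⱼ = |xᵢ - xⱼ|. -/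
open Matrix

private lemma exp_neg_lin_bound (t : ℝ) (ht : 0 ≤ t) :
    |Real.exp (-t) - (1 - t)| ≤ t ^ 2 := by
  have h0 : 0 ≤ Real.exp (-t) - (1 - t) := by
    have := Real.add_one_le_exp (-t)
    linarith
  rw [abs_of_nonneg h0]
  rcases le_or_gt t 1 with h1 | h1
  · have := Real.abs_exp_sub_one_sub_id_le (x := -t) (by rwa [abs_neg, abs_of_nonneg ht])
    have h2 : Real.exp (-t) - 1 - (-t) ≤ (-t) ^ 2 := (abs_le.mp this).2
    nlinarith
  · have h2 : Real.exp (-t) ≤ 1 := by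
      rw [Real.exp_le_one_iff]; linarith
    nlinarith

/-- The column-centered Gaussian Gram matrix satisfies, uniformly in `i, j`,
`(H·K_{G(σ)})ᵢⱼ = -αᵢⱼ²/(2σ²) + (1/(Nσ²))·∑ₖ αₖⱼ²/2 + O(1/σ⁴)` as `σ → ∞`,
where `αᵢⱼ = |xᵢ - xⱼ|`. -/
theorem centered_gaussian_entry_asymptotics
    (N p : ℕ) (hN : 0 < N) (x : Fin N → Fin p → ℝ)
    (KG : ℝ → Matrix (Fin N) (Fin N) ℝ)
    (hKG : ∀ σ i j, KG σ i j =
      Real.exp (-(∑ k, (x i k - x j k) ^ 2) / (2 * σ ^ 2))) :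
    ∃ C σ₀ : ℝ, 0 < C ∧ 0 < σ₀ ∧ ∀ σ ≥ σ₀, ∀ i j,
      |(centeringMatrix N * KG σ) i j -
        (-(∑ k, (x i k - x j k) ^ 2) / (2 * σ ^ 2)
          + ((N : ℝ) * σ ^ 2)⁻¹ * ∑ m, (∑ k, (x m k - x j k) ^ 2) / 2)|
      ≤ C / σ ^ 4 := by
  set d : Fin N → Fin N → ℝ := fun i j => ∑ k, (x i k - x j k) ^ 2 with hd
  have hd0 : ∀ i j, 0 ≤ d i j := by
    intro i j; apply Finset.sum_nonneg; intro k _; positivity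
  set S : ℝ := ∑ i, ∑ j, d i j with hS
  have hS0 : 0 ≤ S := by
    apply Finset.sum_nonneg; intro i _
    apply Finset.sum_nonneg; intro j _; exact hd0 i j
  have hdS : ∀ i j, d i j ≤ S := by
    intro i j
    calc d i j ≤ ∑ j', d i j' :=
          Finset.single_le_sum (fun j' _ => hd0 i j') (Finset.mem_univ j)
      _ ≤ S := Finset.single_le_sum
          (fun i' _ => Finset.sum_nonneg fun j' _ => hd0 i' j') (Finset.mem_univ i)
  refine ⟨S ^ 2 + 1, 1, by positivity, one_pos, ?_⟩
  intro σ hσ i j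
  have hσ0 : (0:ℝ) < σ := lt_of_lt_of_le one_pos hσ
  have hσ2 : (0:ℝ) < σ ^ 2 := by positivity
  have hN0 : (0:ℝ) < (N:ℝ) := by exact_mod_cast hN
  -- the key identity
  set f : Fin N → ℝ := fun m => Real.exp (-(d m j) / (2 * σ ^ 2)) - (1 - d m j / (2 * σ ^ 2))
    with hf
  have hentry : (centeringMatrix N * KG σ) i j
      = KG σ i j - (N:ℝ)⁻¹ * ∑ m, KG σ m j := by
    rw [Matrix.mul_apply]
    simp only [centeringMatrix, Matrix.sub_apply, Matrix.one_apply, Matrix.smul_apply,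
      Matrix.of_apply, smul_eq_mul, mul_one, sub_mul, ite_mul, one_mul, zero_mul]
    rw [Finset.sum_sub_distrib, Finset.sum_ite_eq, if_pos (Finset.mem_univ i),
      ← Finset.mul_sum]
  have hkey : (centeringMatrix N * KG σ) i j -
        (-(∑ k, (x i k - x j k) ^ 2) / (2 * σ ^ 2)
          + ((N : ℝ) * σ ^ 2)⁻¹ * ∑ m, (∑ k, (x m k - x j k) ^ 2) / 2)
      = f i - (N:ℝ)⁻¹ * ∑ m, f m := by
    rw [hentry]
    simp only [hf, hKG, ← hd]
    rw [Finset.sum_sub_distrib, Finset.sum_sub_distrib, Finset.sum_const,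
      Finset.card_univ, Fintype.card_fin, ← Finset.sum_div, ← Finset.sum_div]
    have hNne : (N:ℝ) ≠ 0 := ne_of_gt hN0
    have hσne : σ ^ 2 ≠ 0 := ne_of_gt hσ2
    field_simp
    ring
  rw [hkey]
  -- bound each f m
  have hfb : ∀ m, |f m| ≤ S ^ 2 / (4 * σ ^ 4) := by
    intro m
    have ht0 : 0 ≤ d m j / (2 * σ ^ 2) := by positivity
    have := exp_neg_lin_bound (d m j / (2 * σ ^ 2)) ht0
    have heq : -(d m j / (2 * σ ^ 2)) = -(d m j) / (2 * σ ^ 2) := by ring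
    rw [heq] at this
    refine this.trans ?_
    rw [div_pow]
    have h1 : d m j ^ 2 ≤ S ^ 2 := by nlinarith [hd0 m j, hdS m j, hS0]
    have h2 : (2 * σ ^ 2) ^ 2 = 4 * σ ^ 4 := by ring
    rw [h2]
    exact div_le_div_of_nonneg_right h1 (by positivity) |>.trans_eq rfl
  calc |f i - (N:ℝ)⁻¹ * ∑ m, f m|
      ≤ |f i| + |(N:ℝ)⁻¹ * ∑ m, f m| := abs_sub _ _
    _ ≤ S ^ 2 / (4 * σ ^ 4) + (N:ℝ)⁻¹ * (N * (S ^ 2 / (4 * σ ^ 4))) := by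
        gcongr
        · exact hfb i
        · rw [abs_mul, abs_of_nonneg (by positivity : (0:ℝ) ≤ (N:ℝ)⁻¹)]
          gcongr
          calc |∑ m, f m| ≤ ∑ m, |f m| := Finset.abs_sum_le_sum_abs _ _
            _ ≤ ∑ _m : Fin N, S ^ 2 / (4 * σ ^ 4) :=
                Finset.sum_le_sum fun m _ => hfb m
            _ = N * (S ^ 2 / (4 * σ ^ 4)) := by
                rw [Finset.sum_const, Finset.card_univ, Fintype.card_fin, nsmul_eq_mul]
    _ ≤ (S ^ 2 + 1) / σ ^ 4 := by
        rw [inv_mul_cancel_left₀ (ne_of_gt hN0)]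
        have hσ4 : (0:ℝ) < σ ^ 4 := by positivity
        rw [← add_div, div_le_div_iff₀ (by positivity) hσ4]
        nlinarith [mul_nonneg (sq_nonneg S) hσ4.le, hσ4]
end

section
/- σ²·tr(H·K_{G(σ)}·H·L) converges to tr(H·K̃·H·L) as σ → ∞, where K̃ᵢⱼ = -|xᵢ-xⱼ|²/2, with error O(1/σ²). Equivalently, σ²·(N-1)²·HSIC(K_{G(σ)}, L) = (N-1)²·HSIC(-K_E/2, L) + O(1/σ²). -/
open Matrix

lemma trace_mul_eq_sum_sum {n : ℕ} (A B : Matrix (Fin n) (Fin n) ℝ) :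
    Matrix.trace (A * B) = ∑ i, ∑ j, A i j * B j i := by
  simp [Matrix.trace, Matrix.diag, Matrix.mul_apply]

set_option maxHeartbeats 1600000 in
/-- `σ²·tr(H·K_{G(σ)}·H·L)` converges to `tr(H·K̃·H·L)` with error `O(1/σ²)`,
where `K̃ᵢⱼ = -|xᵢ-xⱼ|²/2`. -/
theorem sigma_sq_hsic_gaussian_asymptotics
    (N p : ℕ) (hN : 0 < N) (x : Fin N → Fin p → ℝ)
    (KG : ℝ → Matrix (Fin N) (Fin N) ℝ)
    (hKG : ∀ σ i j, KG σ i j =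
      Real.exp (-(∑ k, (x i k - x j k) ^ 2) / (2 * σ ^ 2)))
    (Ktilde : Matrix (Fin N) (Fin N) ℝ)
    (hKt : ∀ i j, Ktilde i j = -(∑ k, (x i k - x j k) ^ 2) / 2)
    (L : Matrix (Fin N) (Fin N) ℝ) :
    ∃ C σ₀ : ℝ, 0 < C ∧ 0 < σ₀ ∧ ∀ σ ≥ σ₀,
      |σ ^ 2 * Matrix.trace ((centeringMatrix N * KG σ) * (centeringMatrix N * L))
        - Matrix.trace ((centeringMatrix N * Ktilde) * (centeringMatrix N * L))|
      ≤ C / σ ^ 2 := by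
  set H := centeringMatrix N with hH
  set d : Fin N → Fin N → ℝ := fun i j => ∑ k, (x i k - x j k) ^ 2 with hdDef
  have hd0 : ∀ i j, 0 ≤ d i j := fun i j =>
    Finset.sum_nonneg fun k _ => sq_nonneg _
  set D : ℝ := ∑ i, ∑ j, d i j with hDdef
  have hD0 : 0 ≤ D :=
    Finset.sum_nonneg fun i _ => Finset.sum_nonneg fun j _ => hd0 i j
  have hdD : ∀ i j, d i j ≤ D := by
    intro i j
    calc d i j ≤ ∑ j', d i j' :=
          Finset.single_le_sum (fun j' _ => hd0 i j') (Finset.mem_univ j)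
      _ ≤ D := Finset.single_le_sum
          (fun i' _ => Finset.sum_nonneg fun j' _ => hd0 i' j') (Finset.mem_univ i)
  set J : Matrix (Fin N) (Fin N) ℝ := Matrix.of (fun _ _ => (1 : ℝ)) with hJ
  have hHJ : H * J = 0 := by
    ext i j
    simp only [hH, centeringMatrix, hJ, Matrix.mul_apply, Matrix.sub_apply,
      Matrix.smul_apply, Matrix.of_apply, Matrix.zero_apply, smul_eq_mul, mul_one]
    rw [Finset.sum_sub_distrib]
    simp [Matrix.one_apply, Finset.sum_ite_eq, Finset.card_univ]
    field_simp
    ring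
  set C1 : ℝ := ∑ i, ∑ j, (∑ k, |H i k|) * |(H * L) j i| with hC1def
  have hC1 : 0 ≤ C1 := Finset.sum_nonneg fun i _ => Finset.sum_nonneg fun j _ =>
    mul_nonneg (Finset.sum_nonneg fun k _ => abs_nonneg _) (abs_nonneg _)
  refine ⟨D ^ 2 / 4 * C1 + 1, max 1 (Real.sqrt D), by positivity, by positivity, ?_⟩
  intro σ hσ
  have hσ1 : (1 : ℝ) ≤ σ := le_trans (le_max_left _ _) hσ
  have hσ0 : (0 : ℝ) < σ := by linarith
  have hσsq : (0 : ℝ) < σ ^ 2 := by positivity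
  have hDσ : D ≤ σ ^ 2 := by
    have h1 : Real.sqrt D ≤ σ := le_trans (le_max_right _ _) hσ
    calc D = Real.sqrt D ^ 2 := (Real.sq_sqrt hD0).symm
      _ ≤ σ ^ 2 := by nlinarith [Real.sqrt_nonneg D]
  -- entrywise error bound
  set E : Matrix (Fin N) (Fin N) ℝ :=
    σ ^ 2 • KG σ - σ ^ 2 • J - Ktilde with hEdef
  have hEbound : ∀ i j, |E i j| ≤ D ^ 2 / (4 * σ ^ 2) := by
    intro i j
    have hEij : E i j = σ ^ 2 * KG σ i j - σ ^ 2 * 1 - Ktilde i j := by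
      simp [hEdef, Matrix.sub_apply, Matrix.smul_apply, hJ, smul_eq_mul]
    set u : ℝ := -(d i j) / (2 * σ ^ 2) with hu
    have hKGu : KG σ i j = Real.exp u := by rw [hKG]
    have hKtu : Ktilde i j = σ ^ 2 * u := by
      have hne : (2 * σ ^ 2 : ℝ) ≠ 0 := by positivity
      rw [hKt, hu, mul_div_assoc', eq_div_iff hne]
      ring
    have habs_u : |u| ≤ 1 := by
      rw [hu, abs_div, abs_neg, abs_of_nonneg (hd0 i j)]
      rw [abs_of_pos (by positivity : (0:ℝ) < 2 * σ ^ 2)]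
      rw [div_le_one (by positivity)]
      nlinarith [hdD i j]
    have hexp := Real.abs_exp_sub_one_sub_id_le habs_u
    have heq : E i j = σ ^ 2 * (Real.exp u - 1 - u) := by
      rw [hEij, hKGu, hKtu]; ring
    rw [heq, abs_mul, abs_of_pos hσsq]
    have hu2 : u ^ 2 = d i j ^ 2 / (4 * σ ^ 4) := by
      have hne : (2 * σ ^ 2 : ℝ) ^ 2 ≠ 0 := by positivity
      rw [hu, div_pow, div_eq_div_iff hne (by positivity)]
      ring
    calc σ ^ 2 * |Real.exp u - 1 - u| ≤ σ ^ 2 * u ^ 2 := by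
          exact mul_le_mul_of_nonneg_left hexp (le_of_lt hσsq)
      _ = d i j ^ 2 / (4 * σ ^ 2) := by
          rw [hu2, mul_div_assoc', div_eq_div_iff (by positivity) (by positivity)]
          ring
      _ ≤ D ^ 2 / (4 * σ ^ 2) := by
          gcongr
          exact hdD i j
  -- trace identity
  have key : σ ^ 2 * Matrix.trace (H * KG σ * (H * L))
      - Matrix.trace (H * Ktilde * (H * L))
      = Matrix.trace (H * E * (H * L)) := by
    have hHE : H * E = σ ^ 2 • (H * KG σ) - H * Ktilde := by
      rw [hEdef]
      rw [Matrix.mul_sub, Matrix.mul_sub, Matrix.mul_smul, Matrix.mul_smul, hHJ,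
        smul_zero, sub_zero]
    rw [hHE, Matrix.sub_mul, Matrix.smul_mul, Matrix.trace_sub, Matrix.trace_smul,
      smul_eq_mul]
  rw [key]
  -- final entrywise bound on the trace
  rw [trace_mul_eq_sum_sum]
  calc |∑ i, ∑ j, (H * E) i j * (H * L) j i|
      ≤ ∑ i, ∑ j, |(H * E) i j * (H * L) j i| := by
        refine (Finset.abs_sum_le_sum_abs _ _).trans ?_
        exact Finset.sum_le_sum fun i _ => Finset.abs_sum_le_sum_abs _ _
    _ ≤ ∑ i, ∑ j, (D ^ 2 / (4 * σ ^ 2)) * ((∑ k, |H i k|) * |(H * L) j i|) := by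
        refine Finset.sum_le_sum fun i _ => Finset.sum_le_sum fun j _ => ?_
        rw [abs_mul]
        have h1 : |(H * E) i j| ≤ (D ^ 2 / (4 * σ ^ 2)) * (∑ k, |H i k|) := by
          rw [Matrix.mul_apply]
          refine (Finset.abs_sum_le_sum_abs _ _).trans ?_
          rw [Finset.mul_sum]
          refine Finset.sum_le_sum fun k _ => ?_
          rw [abs_mul, mul_comm (D ^ 2 / (4 * σ ^ 2)) _]
          exact mul_le_mul_of_nonneg_left (hEbound k j) (abs_nonneg _)
        calc |(H * E) i j| * |(H * L) j i|
            ≤ (D ^ 2 / (4 * σ ^ 2)) * (∑ k, |H i k|) * |(H * L) j i| :=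
              mul_le_mul_of_nonneg_right h1 (abs_nonneg _)
          _ = (D ^ 2 / (4 * σ ^ 2)) * ((∑ k, |H i k|) * |(H * L) j i|) := by ring
    _ = (D ^ 2 / (4 * σ ^ 2)) * C1 := by
        rw [hC1def, Finset.mul_sum]
        exact Finset.sum_congr rfl fun i _ => by rw [Finset.mul_sum]
    _ = (D ^ 2 / 4 * C1) / σ ^ 2 := by ring
    _ ≤ (D ^ 2 / 4 * C1 + 1) / σ ^ 2 := by
        gcongr
        linarith
end

section
/- Gaussian CKA converges to linear CKA as bandwidth tends to infinity: under the nondegeneracy hypotheses HSIC(K_lin, K_lin) > 0 and HSIC(L,L) > 0, CKA(K_{G(σ)}, L) = CKA(K_lin, L) + O(1/σ²) as σ → ∞. -/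
open Matrix Filter

/-- `HSIC(K,L) = (N-1)⁻²·tr(HK·HL)`. -/
noncomputable def HSIC (N : ℕ) (K L : Matrix (Fin N) (Fin N) ℝ) : ℝ :=
  ((N : ℝ) - 1)⁻¹ ^ 2 *
    Matrix.trace ((centeringMatrix N * K) * (centeringMatrix N * L))

/-- `CKA(K,L) = HSIC(K,L)/√(HSIC(K,K)·HSIC(L,L))`. -/
noncomputable def CKA (N : ℕ) (K L : Matrix (Fin N) (Fin N) ℝ) : ℝ :=
  HSIC N K L / Real.sqrt (HSIC N K K * HSIC N L L)

section aux
variable {N : ℕ}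

lemma cent_mul_apply (K : Matrix (Fin N) (Fin N) ℝ) (i j : Fin N) :
    (centeringMatrix N * K) i j = K i j - (N : ℝ)⁻¹ * ∑ k, K k j := by
  simp [centeringMatrix, Matrix.sub_mul, Matrix.smul_mul, Matrix.sub_apply,
    Matrix.smul_apply, Matrix.mul_apply, Finset.mul_sum, sub_mul,
    Finset.sum_sub_distrib, Matrix.one_apply, ite_mul]

lemma HSIC_add_left (K K' L : Matrix (Fin N) (Fin N) ℝ) :
    HSIC N (K + K') L = HSIC N K L + HSIC N K' L := by
  simp [HSIC, Matrix.mul_add, Matrix.add_mul, Matrix.trace_add, mul_add]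

lemma HSIC_smul_left (c : ℝ) (K L : Matrix (Fin N) (Fin N) ℝ) :
    HSIC N (c • K) L = c * HSIC N K L := by
  simp [HSIC, Matrix.mul_smul, Matrix.smul_mul, Matrix.trace_smul, smul_eq_mul]
  ring

lemma HSIC_symm (K L : Matrix (Fin N) (Fin N) ℝ) : HSIC N K L = HSIC N L K := by
  rw [HSIC, Matrix.trace_mul_comm, HSIC]

lemma HSIC_colConst (hN : 0 < N) (c : Fin N → ℝ) (L : Matrix (Fin N) (Fin N) ℝ) :
    HSIC N (Matrix.of fun _ j => c j) L = 0 := by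
  have h : centeringMatrix N * (Matrix.of fun _ j => c j) = 0 := by
    ext i j
    rw [cent_mul_apply]
    simp
    field_simp
    ring
  simp [HSIC, h]

lemma colsum_cent (hN : 0 < N) (L : Matrix (Fin N) (Fin N) ℝ) (i : Fin N) :
    ∑ j, (centeringMatrix N * L) j i = 0 := by
  have hN' : (N : ℝ) ≠ 0 := Nat.cast_ne_zero.mpr hN.ne'
  simp only [cent_mul_apply]
  rw [Finset.sum_sub_distrib]
  simp [Finset.card_univ]
  field_simp
  ring

lemma HSIC_rowConst (hN : 0 < N) (c : Fin N → ℝ) (L : Matrix (Fin N) (Fin N) ℝ) :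
    HSIC N (Matrix.of fun i _ => c i) L = 0 := by
  have hK : ∀ i j, (centeringMatrix N * (Matrix.of fun i _ => c i : Matrix (Fin N) (Fin N) ℝ)) i j
      = c i - (N : ℝ)⁻¹ * ∑ k, c k := by
    intro i j; rw [cent_mul_apply]; simp
  have : Matrix.trace ((centeringMatrix N * (Matrix.of fun i _ => c i : Matrix (Fin N) (Fin N) ℝ)) *
      (centeringMatrix N * L)) = 0 := by
    rw [Matrix.trace]
    simp only [Matrix.diag_apply, Matrix.mul_apply, hK]
    calc ∑ i, ∑ j, (c i - (N : ℝ)⁻¹ * ∑ k, c k) * (centeringMatrix N * L) j i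
        = ∑ i, (c i - (N : ℝ)⁻¹ * ∑ k, c k) * ∑ j, (centeringMatrix N * L) j i := by
          simp [Finset.mul_sum]
      _ = 0 := by simp [colsum_cent hN L]
  simp [HSIC, this]

lemma cent_entry_bound (K : Matrix (Fin N) (Fin N) ℝ) {b : ℝ}
    (hb : ∀ i j, |K i j| ≤ b) (i j : Fin N) :
    |(centeringMatrix N * K) i j| ≤ 2 * b := by
  rw [cent_mul_apply]
  have h1 : |(N : ℝ)⁻¹ * ∑ k, K k j| ≤ b := by
    rcases Nat.eq_zero_or_pos N with h | h
    · subst h; simp; exact le_trans (abs_nonneg _) (hb i j)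
    have : |∑ k, K k j| ≤ (N : ℝ) * b := by
      calc |∑ k, K k j| ≤ ∑ k, |K k j| := Finset.abs_sum_le_sum_abs _ _
        _ ≤ ∑ _k : Fin N, b := Finset.sum_le_sum (fun k _ => hb k j)
        _ = (N : ℝ) * b := by simp [Finset.card_univ, mul_comm]
    rw [abs_mul, abs_inv, Nat.abs_cast]
    rw [inv_mul_le_iff₀ (by positivity)]
    linarith [this]
  calc |K i j - (N : ℝ)⁻¹ * ∑ k, K k j| ≤ |K i j| + |(N : ℝ)⁻¹ * ∑ k, K k j| :=
        abs_sub _ _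
    _ ≤ b + b := add_le_add (hb i j) h1
    _ = 2 * b := by ring

lemma HSIC_abs_le (K L : Matrix (Fin N) (Fin N) ℝ) {b c : ℝ}
    (hb : ∀ i j, |K i j| ≤ b) (hc : ∀ i j, |L i j| ≤ c) :
    |HSIC N K L| ≤ ((N : ℝ) - 1)⁻¹ ^ 2 * ((N:ℝ)^2 * (2*b) * (2*c)) := by
  rw [HSIC, abs_mul]
  have hsq : |((N : ℝ) - 1)⁻¹ ^ 2| = ((N : ℝ) - 1)⁻¹ ^ 2 := abs_of_nonneg (sq_nonneg _)
  rw [hsq]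
  apply mul_le_mul_of_nonneg_left _ (sq_nonneg _)
  have htr : |Matrix.trace ((centeringMatrix N * K) * (centeringMatrix N * L))|
      ≤ ∑ i : Fin N, ∑ j : Fin N, (2*b) * (2*c) := by
    rw [Matrix.trace]
    calc |∑ i, ((centeringMatrix N * K) * (centeringMatrix N * L)).diag i|
        ≤ ∑ i, |((centeringMatrix N * K) * (centeringMatrix N * L)).diag i| :=
          Finset.abs_sum_le_sum_abs _ _
      _ ≤ ∑ i : Fin N, ∑ j : Fin N, (2*b) * (2*c) := by
          apply Finset.sum_le_sum
          intro i _
          rw [Matrix.diag_apply, Matrix.mul_apply]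
          calc |∑ j, (centeringMatrix N * K) i j * (centeringMatrix N * L) j i|
              ≤ ∑ j, |(centeringMatrix N * K) i j * (centeringMatrix N * L) j i| :=
                Finset.abs_sum_le_sum_abs _ _
            _ ≤ ∑ j : Fin N, (2*b) * (2*c) := by
                apply Finset.sum_le_sum
                intro j _
                rw [abs_mul]
                exact mul_le_mul (cent_entry_bound K hb i j)
                  (cent_entry_bound L hc j i) (abs_nonneg _)
                  (by linarith [(abs_nonneg (K i j)).trans (hb i j)])
  have heq : ∑ _i : Fin N, ∑ _j : Fin N, (2*b) * (2*c) = (N:ℝ)^2 * (2*b) * (2*c) := by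
    rw [Finset.sum_const, Finset.sum_const, Finset.card_univ, Fintype.card_fin,
      nsmul_eq_mul, nsmul_eq_mul]
    ring
  exact htr.trans heq.le

lemma entry_le_sum_abs (L : Matrix (Fin N) (Fin N) ℝ) (i j : Fin N) :
    |L i j| ≤ ∑ i', ∑ j', |L i' j'| := by
  calc |L i j| ≤ ∑ j', |L i j'| :=
        Finset.single_le_sum (f := fun j' => |L i j'|) (fun k _ => abs_nonneg _)
          (Finset.mem_univ j)
    _ ≤ ∑ i', ∑ j', |L i' j'| :=
        Finset.single_le_sum (f := fun i' => ∑ j', |L i' j'|)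
          (fun k _ => Finset.sum_nonneg fun _ _ => abs_nonneg _) (Finset.mem_univ i)

lemma abs_sqrt_sub_sqrt {u v : ℝ} (hu : 0 ≤ u) (hv : 0 < v) :
    |Real.sqrt u - Real.sqrt v| ≤ |u - v| / Real.sqrt v := by
  have hsv : 0 < Real.sqrt v := Real.sqrt_pos.mpr hv
  have hkey : |Real.sqrt u - Real.sqrt v| * (Real.sqrt u + Real.sqrt v) = |u - v| := by
    rw [← abs_of_nonneg (by positivity : (0:ℝ) ≤ Real.sqrt u + Real.sqrt v), ← abs_mul]
    congr 1
    have h1 : Real.sqrt u ^ 2 = u := Real.sq_sqrt hu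
    have h2 : Real.sqrt v ^ 2 = v := Real.sq_sqrt hv.le
    nlinarith [h1, h2]
  rw [le_div_iff₀ hsv]
  calc |Real.sqrt u - Real.sqrt v| * Real.sqrt v
      ≤ |Real.sqrt u - Real.sqrt v| * (Real.sqrt u + Real.sqrt v) := by
        apply mul_le_mul_of_nonneg_left _ (abs_nonneg _)
        nlinarith [Real.sqrt_nonneg u]
    _ = |u - v| := hkey

end aux

set_option maxHeartbeats 1000000 in
/-- Gaussian CKA converges to linear CKA as bandwidth tends to infinity:
`CKA(K_{G(σ)}, L) = CKA(K_lin, L) + O(1/σ²)`. -/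
theorem gaussian_cka_eq_linear_cka_bigO
    (N p : ℕ) (hN : 0 < N) (x : Fin N → Fin p → ℝ)
    (KG : ℝ → Matrix (Fin N) (Fin N) ℝ)
    (hKG : ∀ σ i j, KG σ i j =
      Real.exp (-(∑ k, (x i k - x j k) ^ 2) / (2 * σ ^ 2)))
    (Klin : Matrix (Fin N) (Fin N) ℝ)
    (hKlin : ∀ i j, Klin i j = ∑ k, x i k * x j k)
    (L : Matrix (Fin N) (Fin N) ℝ) (hL : L.PosDef)
    (hlin : 0 < HSIC N Klin Klin) (hLL : 0 < HSIC N L L) :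
    ∃ C σ₀ : ℝ, 0 < C ∧ 0 < σ₀ ∧ ∀ σ ≥ σ₀,
      |CKA N (KG σ) L - CKA N Klin L| ≤ C / σ ^ 2 := by
  classical
  set cH : ℝ := ((N:ℝ) - 1)⁻¹ ^ 2 with hcHdef
  have hcH0 : 0 ≤ cH := sq_nonneg _
  set Dm : Matrix (Fin N) (Fin N) ℝ := Matrix.of (fun i j => ∑ k, (x i k - x j k)^2)
    with hDmdef
  set Em : ℝ → Matrix (Fin N) (Fin N) ℝ :=
    fun σ => KG σ - Matrix.of (fun _ _ => (1:ℝ)) + (2*σ^2)⁻¹ • Dm with hEmdef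
  -- decomposition of Dm
  have hDmsplit : Dm = (Matrix.of fun i _ => ∑ k, (x i k)^2)
      + (Matrix.of fun _ j => ∑ k, (x j k)^2) + (-2:ℝ) • Klin := by
    ext i j
    simp only [hDmdef, Matrix.add_apply, Matrix.smul_apply, Matrix.of_apply, hKlin,
      smul_eq_mul]
    rw [Finset.mul_sum, ← Finset.sum_add_distrib, ← Finset.sum_add_distrib]
    apply Finset.sum_congr rfl
    intro k _
    ring
  have hD_left : ∀ M, HSIC N Dm M = -2 * HSIC N Klin M := by
    intro M
    rw [hDmsplit, HSIC_add_left, HSIC_add_left, HSIC_smul_left]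
    have h1 : HSIC N (Matrix.of fun i _ => ∑ k, (x i k)^2) M = 0 :=
      HSIC_rowConst hN _ M
    have h2 : HSIC N (Matrix.of fun _ j => ∑ k, (x j k)^2) M = 0 :=
      HSIC_colConst hN _ M
    rw [h1, h2]
    ring
  have hD_right : ∀ M, HSIC N M Dm = -2 * HSIC N M Klin := by
    intro M
    rw [HSIC_symm, hD_left M, HSIC_symm Klin M]
  have h0L : ∀ M, HSIC N (Matrix.of fun _ _ => (1:ℝ)) M = 0 :=
    fun M => HSIC_colConst hN (fun _ => (1:ℝ)) M
  have hdecomp : ∀ σ : ℝ, KG σ = Matrix.of (fun _ _ => (1:ℝ)) + (-(2*σ^2)⁻¹) • Dm + Em σ := by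
    intro σ
    rw [hEmdef]
    dsimp only
    rw [neg_smul]
    abel
  have hleft : ∀ (σ : ℝ) M, HSIC N (KG σ) M
      = -(2*σ^2)⁻¹ * HSIC N Dm M + HSIC N (Em σ) M := by
    intro σ M
    rw [hdecomp σ, HSIC_add_left, HSIC_add_left, h0L, HSIC_smul_left]
    ring
  have hright : ∀ (σ : ℝ) M, HSIC N M (KG σ)
      = -(2*σ^2)⁻¹ * HSIC N M Dm + HSIC N M (Em σ) := by
    intro σ M
    rw [HSIC_symm M (KG σ), hleft σ M, HSIC_symm Dm M, HSIC_symm (Em σ) M]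
  have hA : ∀ σ : ℝ, HSIC N (KG σ) L = (σ^2)⁻¹ * HSIC N Klin L + HSIC N (Em σ) L := by
    intro σ
    rw [hleft σ L, hD_left L, mul_inv]
    ring
  have hB : ∀ σ : ℝ, HSIC N (KG σ) (KG σ) = ((σ^2)⁻¹)^2 * HSIC N Klin Klin
      + (-(2*σ^2)⁻¹ * (HSIC N Dm (Em σ) + HSIC N (Em σ) Dm)
         + HSIC N (Em σ) (Em σ)) := by
    intro σ
    rw [hleft σ (KG σ), hright σ Dm, hright σ (Em σ), hD_left Dm, hD_right Klin, mul_inv]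
    ring
  -- entry bounds
  set dmx : ℝ := ∑ i, ∑ j, |Dm i j| with hdmxdef
  have hdmx0 : 0 ≤ dmx :=
    Finset.sum_nonneg fun _ _ => Finset.sum_nonneg fun _ _ => abs_nonneg _
  have hDle : ∀ i j, |Dm i j| ≤ dmx := fun i j => entry_le_sum_abs Dm i j
  have hDnn : ∀ i j, 0 ≤ Dm i j := by
    intro i j
    simp only [hDmdef, Matrix.of_apply]
    exact Finset.sum_nonneg fun _ _ => sq_nonneg _
  set cL : ℝ := ∑ i, ∑ j, |L i j| with hcLdef
  have hcL0 : 0 ≤ cL :=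
    Finset.sum_nonneg fun _ _ => Finset.sum_nonneg fun _ _ => abs_nonneg _
  have hLle : ∀ i j, |L i j| ≤ cL := fun i j => entry_le_sum_abs L i j
  set σ₁ : ℝ := 1 + dmx with hσ₁def
  have hσ₁pos : (1:ℝ) ≤ σ₁ := by simp [hσ₁def]; linarith
  -- Em entry bound
  have hEmle : ∀ σ : ℝ, σ₁ ≤ σ → ∀ i j, |Em σ i j| ≤ dmx^2 * ((σ^2)⁻¹)^2 := by
    intro σ hσ i j
    have hσ1 : (1:ℝ) ≤ σ := le_trans hσ₁pos hσ
    have h2 : (0:ℝ) < σ^2 := by positivity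
    have hσ2 : dmx ≤ σ^2 := by
      rw [hσ₁def] at hσ
      nlinarith [hσ, hdmx0]
    have hd : Dm i j ≤ dmx := le_trans (le_abs_self _) (hDle i j)
    have h2σ : (0:ℝ) < 2*σ^2 := by positivity
    have hx : Em σ i j = Real.exp (-(Dm i j) * (2*σ^2)⁻¹) - 1 - (-(Dm i j) * (2*σ^2)⁻¹) := by
      have hDij : (Dm i j : ℝ) = ∑ k, (x i k - x j k)^2 := by
        simp [hDmdef]
      have hKGij : KG σ i j = Real.exp (-(Dm i j) * (2*σ^2)⁻¹) := by
        rw [hKG σ i j, hDij, neg_div, div_eq_mul_inv, neg_mul]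
      simp only [hEmdef, Matrix.add_apply, Matrix.sub_apply, Matrix.smul_apply,
        smul_eq_mul, Matrix.of_apply, hKGij]
      ring
    have hxabs : |(-(Dm i j) * (2*σ^2)⁻¹)| ≤ 1 := by
      rw [abs_mul, abs_neg, abs_of_nonneg (hDnn i j), abs_inv, abs_of_pos h2σ]
      rw [mul_inv_le_iff₀ h2σ, one_mul]
      nlinarith [hDnn i j]
    have hb := Real.abs_exp_sub_one_sub_id_le hxabs
    rw [hx]
    refine le_trans hb ?_
    have hi : (2*σ^2)⁻¹ ≤ (σ^2)⁻¹ := by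
      apply inv_anti₀ h2
      nlinarith
    have hmul : Dm i j * (2*σ^2)⁻¹ ≤ dmx * (σ^2)⁻¹ :=
      mul_le_mul hd hi (by positivity) hdmx0
    have hnn : 0 ≤ Dm i j * (2*σ^2)⁻¹ := mul_nonneg (hDnn i j) (by positivity)
    calc (-(Dm i j) * (2*σ^2)⁻¹)^2 = (Dm i j * (2*σ^2)⁻¹)^2 := by ring
      _ ≤ (dmx * (σ^2)⁻¹)^2 := by
          apply pow_le_pow_left₀ hnn hmul
      _ = dmx^2 * ((σ^2)⁻¹)^2 := by ring
  clear_value cH Dm Em dmx cL σ₁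
  -- constants
  set C₁ : ℝ := cH * (N:ℝ)^2 * 4 * dmx^2 * cL with hC₁def
  have hC₁0 : 0 ≤ C₁ := by
    rw [hC₁def]
    exact mul_nonneg (mul_nonneg (mul_nonneg (mul_nonneg hcH0 (sq_nonneg _))
      (by norm_num)) (sq_nonneg _)) hcL0
  set C₂ : ℝ := 4*cH*(N:ℝ)^2*dmx^3 + 4*cH*(N:ℝ)^2*dmx^4 with hC₂def
  have hC₂0 : 0 ≤ C₂ := by
    rw [hC₂def]
    have h3 : (0:ℝ) ≤ dmx^3 := pow_nonneg hdmx0 3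
    have h4 : (0:ℝ) ≤ dmx^4 := pow_nonneg hdmx0 4
    have hn2 : (0:ℝ) ≤ (N:ℝ)^2 := sq_nonneg _
    nlinarith [mul_nonneg (mul_nonneg hcH0 hn2) h3, mul_nonneg (mul_nonneg hcH0 hn2) h4]
  clear_value C₁ C₂
  -- bound for the numerator
  have hAbound : ∀ σ : ℝ, σ₁ ≤ σ →
      |σ^2 * HSIC N (KG σ) L - HSIC N Klin L| ≤ C₁ * (σ^2)⁻¹ := by
    intro σ hσ
    have hσ1 : (1:ℝ) ≤ σ := le_trans hσ₁pos hσ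
    have h2 : (0:ℝ) < σ^2 := by positivity
    have hne : (σ^2 : ℝ) ≠ 0 := h2.ne'
    have heq : σ^2 * HSIC N (KG σ) L - HSIC N Klin L = σ^2 * HSIC N (Em σ) L := by
      rw [hA σ]
      field_simp
      ring
    rw [heq, abs_mul, abs_of_pos h2]
    have hEL := HSIC_abs_le (Em σ) L (hEmle σ hσ) hLle
    rw [← hcHdef] at hEL
    calc σ^2 * |HSIC N (Em σ) L|
        ≤ σ^2 * (cH * ((N:ℝ)^2 * (2*(dmx^2 * ((σ^2)⁻¹)^2)) * (2*cL))) :=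
          mul_le_mul_of_nonneg_left hEL h2.le
      _ = C₁ * (σ^2)⁻¹ := by
          rw [hC₁def]
          field_simp
          ring
  -- bound for second factor
  have hBbound : ∀ σ : ℝ, σ₁ ≤ σ →
      |(σ^2)^2 * HSIC N (KG σ) (KG σ) - HSIC N Klin Klin| ≤ C₂ * (σ^2)⁻¹ := by
    intro σ hσ
    have hσ1 : (1:ℝ) ≤ σ := le_trans hσ₁pos hσ
    have h2 : (0:ℝ) < σ^2 := by positivity
    have h2σ : (0:ℝ) < 2*σ^2 := by positivity
    have hne : (σ^2 : ℝ) ≠ 0 := h2.ne'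
    have hu1 : (σ^2)⁻¹ ≤ 1 := by
      have : (1:ℝ) ≤ σ^2 := by nlinarith
      exact inv_le_one_of_one_le₀ this
    have hu0 : (0:ℝ) < (σ^2)⁻¹ := by positivity
    have heq : (σ^2)^2 * HSIC N (KG σ) (KG σ) - HSIC N Klin Klin
        = (σ^2)^2 * (-(2*σ^2)⁻¹ * (HSIC N Dm (Em σ) + HSIC N (Em σ) Dm)
            + HSIC N (Em σ) (Em σ)) := by
      rw [hB σ]
      field_simp
      ring
    rw [heq, abs_mul, abs_of_nonneg (by positivity : (0:ℝ) ≤ (σ^2)^2)]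
    have hDE := HSIC_abs_le Dm (Em σ) hDle (hEmle σ hσ)
    have hED := HSIC_abs_le (Em σ) Dm (hEmle σ hσ) hDle
    have hEE := HSIC_abs_le (Em σ) (Em σ) (hEmle σ hσ) (hEmle σ hσ)
    rw [← hcHdef] at hDE hED hEE
    set BDE : ℝ := cH * ((N:ℝ)^2 * (2*dmx) * (2*(dmx^2 * ((σ^2)⁻¹)^2))) with hBDEdef
    set BED : ℝ := cH * ((N:ℝ)^2 * (2*(dmx^2 * ((σ^2)⁻¹)^2)) * (2*dmx)) with hBEDdef
    set BEE : ℝ := cH * ((N:ℝ)^2 * (2*(dmx^2 * ((σ^2)⁻¹)^2))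
      * (2*(dmx^2 * ((σ^2)⁻¹)^2))) with hBEEdef
    have hinner : |(-(2*σ^2)⁻¹ * (HSIC N Dm (Em σ) + HSIC N (Em σ) Dm)
        + HSIC N (Em σ) (Em σ))| ≤ (2*σ^2)⁻¹ * (BDE + BED) + BEE := by
      calc |(-(2*σ^2)⁻¹ * (HSIC N Dm (Em σ) + HSIC N (Em σ) Dm)
            + HSIC N (Em σ) (Em σ))|
          ≤ |(-(2*σ^2)⁻¹ * (HSIC N Dm (Em σ) + HSIC N (Em σ) Dm))|
            + |HSIC N (Em σ) (Em σ)| := abs_add_le _ _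
        _ = (2*σ^2)⁻¹ * |HSIC N Dm (Em σ) + HSIC N (Em σ) Dm|
            + |HSIC N (Em σ) (Em σ)| := by
            rw [abs_mul, abs_neg, abs_inv, abs_of_pos h2σ]
        _ ≤ (2*σ^2)⁻¹ * (BDE + BED) + BEE := by
            apply add_le_add
            · apply mul_le_mul_of_nonneg_left _ (by positivity)
              exact (abs_add_le _ _).trans (add_le_add hDE hED)
            · exact hEE
    calc (σ^2)^2 * |(-(2*σ^2)⁻¹ * (HSIC N Dm (Em σ) + HSIC N (Em σ) Dm)
          + HSIC N (Em σ) (Em σ))|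
        ≤ (σ^2)^2 * ((2*σ^2)⁻¹ * (BDE + BED) + BEE) :=
          mul_le_mul_of_nonneg_left hinner (by positivity)
      _ = 4*cH*(N:ℝ)^2*dmx^3 * (σ^2)⁻¹ + 4*cH*(N:ℝ)^2*dmx^4 * ((σ^2)⁻¹)^2 := by
          rw [hBDEdef, hBEDdef, hBEEdef]
          field_simp
          ring
      _ ≤ C₂ * (σ^2)⁻¹ := by
          rw [hC₂def]
          have hsq : ((σ^2)⁻¹)^2 ≤ (σ^2)⁻¹ := by nlinarith
          nlinarith [mul_nonneg (mul_nonneg (mul_nonneg (by norm_num : (0:ℝ) ≤ 4) hcH0)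
            (sq_nonneg (N:ℝ))) (pow_nonneg hdmx0 4)]
  -- abbreviations for the limit quantities
  set a₀ : ℝ := HSIC N Klin L with ha₀def
  set b₀ : ℝ := HSIC N Klin Klin with hb₀def
  set cc : ℝ := HSIC N L L with hccdef
  set m : ℝ := Real.sqrt (b₀/2 * cc) with hmdef
  have hmpos : 0 < m := Real.sqrt_pos.mpr (mul_pos (half_pos hlin) hLL)
  set S₀ : ℝ := Real.sqrt (b₀ * cc) with hS₀def
  have hS₀pos : 0 < S₀ := Real.sqrt_pos.mpr (mul_pos hlin hLL)
  have hS₀sq : S₀ * S₀ = b₀ * cc := Real.mul_self_sqrt (mul_pos hlin hLL).le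
  clear_value a₀ b₀ cc m S₀
  set C : ℝ := C₁/m + |a₀| * C₂/(m*b₀) + 1 with hCdef
  have hCpos : 0 < C := by
    have h1 : 0 ≤ C₁/m := div_nonneg hC₁0 hmpos.le
    have h2 : 0 ≤ |a₀| * C₂/(m*b₀) :=
      div_nonneg (mul_nonneg (abs_nonneg _) hC₂0) (mul_nonneg hmpos.le hlin.le)
    rw [hCdef]; linarith
  clear_value C
  have hσ₀pos : 0 < σ₁ + 2*C₂/b₀ := by
    have h1 : 0 ≤ 2*C₂/b₀ := div_nonneg (by linarith) hlin.le
    linarith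
  refine ⟨C, σ₁ + 2*C₂/b₀, hCpos, hσ₀pos, ?_⟩
  intro σ hσ
  have hσσ₁ : σ₁ ≤ σ := by
    have : 0 ≤ 2*C₂/b₀ := div_nonneg (by linarith) hlin.le
    linarith
  have hσ1 : (1:ℝ) ≤ σ := le_trans hσ₁pos hσσ₁
  have h2 : (0:ℝ) < σ^2 := by positivity
  have hne : (σ^2 : ℝ) ≠ 0 := h2.ne'
  have hu0 : (0:ℝ) < (σ^2)⁻¹ := by positivity
  -- B σ stays away from zero
  have hBb := hBbound σ hσσ₁
  have hC₂u : C₂ * (σ^2)⁻¹ ≤ b₀/2 := by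
    rw [inv_eq_one_div, mul_one_div, div_le_div_iff₀ h2 (by norm_num : (0:ℝ) < 2)]
    have hq : 2*C₂/b₀ ≤ σ := by linarith
    have h2C : 2*C₂ = (2*C₂/b₀)*b₀ := by field_simp
    nlinarith [mul_le_mul_of_nonneg_right hq hlin.le]
  set B : ℝ := (σ^2)^2 * HSIC N (KG σ) (KG σ) with hBdef
  set A : ℝ := σ^2 * HSIC N (KG σ) L with hAdef
  have hBlow : b₀/2 ≤ B := by
    have := abs_le.mp hBb
    linarith [this.1]
  have hBpos : 0 < B := lt_of_lt_of_le (half_pos hlin) hBlow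
  -- rewrite CKA of Gaussian kernel
  have hCKAg : CKA N (KG σ) L = A / Real.sqrt (B * cc) := by
    rw [CKA, hAdef, hBdef, hccdef]
    rw [show (σ^2)^2 * HSIC N (KG σ) (KG σ) * HSIC N L L
        = (σ^2)^2 * (HSIC N (KG σ) (KG σ) * HSIC N L L) from by ring]
    rw [Real.sqrt_mul (show (0:ℝ) ≤ (σ^2)^2 by positivity), Real.sqrt_sq h2.le]
    rw [mul_div_mul_left _ _ hne]
  have hCKAlin : CKA N Klin L = a₀ / S₀ := by
    rw [CKA, ha₀def, hS₀def, hb₀def, hccdef]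
  rw [hCKAg, hCKAlin]
  set S : ℝ := Real.sqrt (B * cc) with hSdef
  have hmS : m ≤ S := by
    rw [hmdef, hSdef]
    apply Real.sqrt_le_sqrt
    nlinarith [hBlow, hLL]
  have hSpos : 0 < S := lt_of_lt_of_le hmpos hmS
  have hsplit : A/S - a₀/S₀ = (A - a₀)/S + a₀*(S₀ - S)/(S*S₀) := by
    field_simp
    ring
  rw [hsplit]
  have hAb := hAbound σ hσσ₁
  have hterm1 : |(A - a₀)/S| ≤ C₁*(σ^2)⁻¹/m := by
    rw [abs_div, abs_of_pos hSpos]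
    apply div_le_div₀ (by positivity) hAb hmpos hmS
  have hsqdiff : |S₀ - S| ≤ C₂*(σ^2)⁻¹*cc/S₀ := by
    rw [abs_sub_comm, hSdef, hS₀def]
    refine le_trans (abs_sqrt_sub_sqrt (mul_pos hBpos hLL).le (mul_pos hlin hLL)) ?_
    have hnum : |B*cc - b₀*cc| ≤ C₂*(σ^2)⁻¹*cc := by
      rw [show B*cc - b₀*cc = (B - b₀)*cc from by ring, abs_mul, abs_of_pos hLL]
      exact mul_le_mul_of_nonneg_right hBb hLL.le
    rw [← hS₀def]
    exact (div_le_div_iff_of_pos_right hS₀pos).mpr hnum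
  have hterm2 : |a₀*(S₀-S)/(S*S₀)| ≤ |a₀| * (C₂*(σ^2)⁻¹*cc/S₀) / (m*S₀) := by
    rw [abs_div, abs_mul, abs_of_pos (mul_pos hSpos hS₀pos)]
    refine div_le_div₀
      (mul_nonneg (abs_nonneg _)
        (div_nonneg (mul_nonneg (mul_nonneg hC₂0 hu0.le) hLL.le) hS₀pos.le))
      (mul_le_mul_of_nonneg_left hsqdiff (abs_nonneg _))
      (mul_pos hmpos hS₀pos)
      (mul_le_mul_of_nonneg_right hmS hS₀pos.le)
  have htot : |(A - a₀)/S + a₀*(S₀-S)/(S*S₀)|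
      ≤ C₁*(σ^2)⁻¹/m + |a₀| * (C₂*(σ^2)⁻¹*cc/S₀)/(m*S₀) :=
    (abs_add_le _ _).trans (add_le_add hterm1 hterm2)
  refine htot.trans ?_
  have hccne : cc ≠ 0 := hLL.ne'
  have hb₀ne : b₀ ≠ 0 := hlin.ne'
  have hrhs : C₁*(σ^2)⁻¹/m + |a₀| * (C₂*(σ^2)⁻¹*cc/S₀)/(m*S₀)
      = (C₁/m + |a₀| * C₂/(m*b₀)) * (σ^2)⁻¹ := by
    rw [show |a₀| * (C₂*(σ^2)⁻¹*cc/S₀)/(m*S₀)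
        = |a₀| * C₂ * (σ^2)⁻¹ * cc / (m * (S₀ * S₀)) from by ring, hS₀sq]
    field_simp
  rw [hrhs]
  calc (C₁/m + |a₀| * C₂/(m*b₀)) * (σ^2)⁻¹ ≤ C * (σ^2)⁻¹ := by
        apply mul_le_mul_of_nonneg_right _ hu0.le
        rw [hCdef]; linarith
    _ = C / σ^2 := (div_eq_mul_inv C (σ^2)).symm
end

section
/- If both kernels are Gaussian, CKA(K_{G(σ₁)}(X), L_{G(σ₂)}(Y)) converges to CKA(K_lin(X), L_lin(Y)) as min(σ₁,σ₂) → ∞, with error O(1/min(σ₁,σ₂)²). -/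
open Matrix

/-- `CKA(K,L) = tr(HK·HL)/√(tr(HK·HK)·tr(HL·HL))`. -/
noncomputable def CKA0 (N : ℕ) (K L : Matrix (Fin N) (Fin N) ℝ) : ℝ :=
  Matrix.trace ((centeringMatrix N * K) * (centeringMatrix N * L)) /
    Real.sqrt
      (Matrix.trace ((centeringMatrix N * K) * (centeringMatrix N * K)) *
        Matrix.trace ((centeringMatrix N * L) * (centeringMatrix N * L)))

namespace CKAhelper

variable {N : ℕ}

lemma H_apply (N : ℕ) (i j : Fin N) :
    centeringMatrix N i j = (if i = j then (1:ℝ) else 0) - (N:ℝ)⁻¹ := by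
  simp [centeringMatrix, Matrix.one_apply]

lemma H_abs_le (hN : 0 < N) (i j : Fin N) : |centeringMatrix N i j| ≤ 2 := by
  rw [H_apply]
  have h1 : (0:ℝ) ≤ (N:ℝ)⁻¹ := by positivity
  have h2 : (N:ℝ)⁻¹ ≤ 1 := by
    apply inv_le_one_of_one_le₀
    exact_mod_cast hN
  split_ifs with h
  · rw [abs_le]; constructor <;> linarith
  · rw [abs_le]; constructor <;> simp <;> linarith

lemma H_mul_colConst (hN : 0 < N) (a : Fin N → ℝ) :
    centeringMatrix N * Matrix.of (fun _ j => a j) = 0 := by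
  ext i j
  simp only [centeringMatrix, Matrix.sub_mul, Matrix.smul_mul, Matrix.one_mul,
    Matrix.sub_apply, Matrix.smul_apply, Matrix.zero_apply, Matrix.mul_apply,
    Matrix.of_apply, smul_eq_mul, one_mul]
  have hNne : (N:ℝ) ≠ 0 := by exact_mod_cast hN.ne'
  simp [Matrix.one_apply, sub_mul, ite_mul, Finset.sum_sub_distrib, Finset.sum_ite_eq]
  field_simp
  ring

lemma rowConst_mul_H (hN : 0 < N) (a : Fin N → ℝ) :
    Matrix.of (fun i _ => a i) * centeringMatrix N = 0 := by
  ext i j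
  simp only [centeringMatrix, Matrix.mul_sub, Matrix.mul_smul, Matrix.mul_one,
    Matrix.sub_apply, Matrix.smul_apply, Matrix.zero_apply, Matrix.mul_apply,
    Matrix.of_apply, smul_eq_mul, mul_one]
  have hNne : (N:ℝ) ≠ 0 := by exact_mod_cast hN.ne'
  simp [Matrix.one_apply, mul_sub, mul_ite, Finset.sum_sub_distrib, Finset.sum_ite_eq']
  field_simp
  ring

lemma H_idem (hN : 0 < N) :
    centeringMatrix N * centeringMatrix N = centeringMatrix N := by
  have h := H_mul_colConst hN (fun _ => (1:ℝ))
  calc centeringMatrix N * centeringMatrix N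
      = centeringMatrix N * 1 -
        (N:ℝ)⁻¹ • (centeringMatrix N * Matrix.of (fun _ _ => (1:ℝ))) := by
        rw [centeringMatrix]; rw [Matrix.mul_sub, Matrix.mul_smul]
    _ = centeringMatrix N := by rw [h, Matrix.mul_one]; simp

lemma trace_HH (hN : 0 < N) (K L : Matrix (Fin N) (Fin N) ℝ) :
    Matrix.trace ((centeringMatrix N * K) * (centeringMatrix N * L)) =
      Matrix.trace ((centeringMatrix N * K * centeringMatrix N) *
        (centeringMatrix N * L * centeringMatrix N)) := by
  set H := centeringMatrix N with hH
  have h1 : H * K * H * (H * L * H) = H * K * H * L * H := by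
    rw [show H * K * H * (H * L * H) = H * K * (H * H) * L * H by
      simp only [Matrix.mul_assoc], H_idem hN]
  have h2 : H * (H * K * H * L) = H * K * (H * L) := by
    rw [show H * (H * K * H * L) = (H * H) * K * (H * L) by
      simp only [Matrix.mul_assoc], H_idem hN]
  rw [h1, Matrix.trace_mul_comm (H * K * H * L) H, h2]

/-- the CKA functional as a function of a pair of (function-typed) matrices. -/
noncomputable def Fc (N : ℕ) (z : (Fin N → Fin N → ℝ) × (Fin N → Fin N → ℝ)) : ℝ :=
  Matrix.trace (Matrix.of z.1 * Matrix.of z.2) /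
    Real.sqrt (Matrix.trace (Matrix.of z.1 * Matrix.of z.1) *
      Matrix.trace (Matrix.of z.2 * Matrix.of z.2))

lemma CKA0_eq_Fc (hN : 0 < N) (K L : Matrix (Fin N) (Fin N) ℝ) :
    CKA0 N K L = Fc N (Matrix.of.symm (centeringMatrix N * K * centeringMatrix N),
      Matrix.of.symm (centeringMatrix N * L * centeringMatrix N)) := by
  unfold CKA0 Fc
  simp only [Equiv.apply_symm_apply]
  rw [trace_HH hN K L, trace_HH hN K K, trace_HH hN L L]

lemma Fc_smul (N : ℕ) (c c' : ℝ) (hc : 0 < c) (hc' : 0 < c')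
    (A B : Fin N → Fin N → ℝ) :
    Fc N (c • A, c' • B) = Fc N (A, B) := by
  unfold Fc
  have hof : ∀ (d : ℝ) (M : Fin N → Fin N → ℝ), Matrix.of (d • M) = d • Matrix.of M :=
    fun d M => rfl
  simp only [hof]
  rw [smul_mul_smul_comm, smul_mul_smul_comm, smul_mul_smul_comm,
    Matrix.trace_smul, Matrix.trace_smul, Matrix.trace_smul]
  simp only [smul_eq_mul]
  have key : c * c * Matrix.trace (Matrix.of A * Matrix.of A) *
      (c' * c' * Matrix.trace (Matrix.of B * Matrix.of B)) =
      (c * c') ^ 2 * (Matrix.trace (Matrix.of A * Matrix.of A) *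
        Matrix.trace (Matrix.of B * Matrix.of B)) := by ring
  rw [key, Real.sqrt_mul (sq_nonneg _), Real.sqrt_sq (by positivity : (0:ℝ) ≤ c * c')]
  exact mul_div_mul_left _ _ (by positivity)

end CKAhelper

namespace CKAhelper

lemma Fc_contDiffAt (N : ℕ) (z₀ : (Fin N → Fin N → ℝ) × (Fin N → Fin N → ℝ))
    (hpos : 0 < Matrix.trace (Matrix.of z₀.1 * Matrix.of z₀.1) *
      Matrix.trace (Matrix.of z₀.2 * Matrix.of z₀.2)) :
    ContDiffAt ℝ 1 (Fc N) z₀ := by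
  have key : ∀ (f g : ((Fin N → Fin N → ℝ) × (Fin N → Fin N → ℝ)) →
      (Fin N → Fin N → ℝ)), ContDiff ℝ 1 f → ContDiff ℝ 1 g →
      ContDiff ℝ 1 (fun z => Matrix.trace (Matrix.of (f z) * Matrix.of (g z))) := by
    intro f g hf hg
    have : (fun z : (Fin N → Fin N → ℝ) × (Fin N → Fin N → ℝ) =>
        Matrix.trace (Matrix.of (f z) * Matrix.of (g z))) =
        fun z => ∑ i, ∑ j, f z i j * g z j i := by
      funext z
      simp [Matrix.trace, Matrix.mul_apply, Matrix.diag]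
    rw [this]
    apply ContDiff.sum; intro i _
    apply ContDiff.sum; intro j _
    exact ((contDiff_pi.mp (contDiff_pi.mp hf i) j)).mul
      ((contDiff_pi.mp (contDiff_pi.mp hg j) i))
  have h12 := key _ _ contDiff_fst contDiff_snd
  have h11 := key _ _ contDiff_fst contDiff_fst
  have h22 := key _ _ contDiff_snd contDiff_snd
  have hden : ContDiffAt ℝ 1 (fun z : (Fin N → Fin N → ℝ) × (Fin N → Fin N → ℝ) =>
      Real.sqrt (Matrix.trace (Matrix.of z.1 * Matrix.of z.1) *
        Matrix.trace (Matrix.of z.2 * Matrix.of z.2))) z₀ :=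
    (Real.contDiffAt_sqrt hpos.ne').comp z₀ ((h11.mul h22).contDiffAt)
  exact h12.contDiffAt.div hden (Real.sqrt_pos.mpr hpos).ne'

lemma key_bound {N : ℕ} (hN : 0 < N) {p : ℕ} (x : Fin N → Fin p → ℝ)
    (KG : ℝ → Matrix (Fin N) (Fin N) ℝ)
    (hKG : ∀ σ i j, KG σ i j = Real.exp (-(∑ k, (x i k - x j k)^2) / (2*σ^2)))
    (Klin : Matrix (Fin N) (Fin N) ℝ)
    (hKlin : ∀ i j, Klin i j = ∑ k, x i k * x j k)
    (S : ℝ) (hSb : ∀ i j, (∑ k, (x i k - x j k)^2) ≤ S)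
    (σ : ℝ) (hσ1 : 1 ≤ σ) (hσS : S ≤ 2 * σ^2) :
    ∀ i j, |(σ^2 • (centeringMatrix N * KG σ * centeringMatrix N)
        - centeringMatrix N * Klin * centeringMatrix N) i j|
      ≤ (N:ℝ)^2 * S^2 / σ^2 := by
  have hσ0 : (0:ℝ) < σ := lt_of_lt_of_le one_pos hσ1
  have hS0 : (0:ℝ) ≤ S := by
    rcases Fin.pos_iff_nonempty.mp hN with ⟨i⟩
    exact le_trans (by positivity) (hSb i i)
  set H := centeringMatrix N with hHdef
  set a : Fin N → ℝ := fun i => ∑ k, x i k ^ 2 with ha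
  set Mr : Matrix (Fin N) (Fin N) ℝ := Matrix.of (fun i _ => -(a i)/2) with hMr
  set Mc : Matrix (Fin N) (Fin N) ℝ := Matrix.of (fun _ j => -(a j)/2) with hMc
  set W : Matrix (Fin N) (Fin N) ℝ :=
    σ^2 • KG σ - σ^2 • (Matrix.of fun _ _ => (1:ℝ)) - Klin - Mr - Mc with hW
  -- Step A: entrywise bound on W
  have stepA : ∀ i j, |W i j| ≤ S^2 / (4*σ^2) := by
    intro i j
    set D := ∑ k, (x i k - x j k)^2 with hD
    have hD0 : 0 ≤ D := by positivity
    have hDS : D ≤ S := hSb i j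
    set u := -D / (2*σ^2) with hu
    have hDsum : D = a i + a j - 2 * ∑ k, x i k * x j k := by
      simp only [hD, ha]
      rw [← Finset.sum_add_distrib, Finset.mul_sum, ← Finset.sum_sub_distrib]
      apply Finset.sum_congr rfl
      intro k _
      ring
    have hσu : σ^2 * u = -D/2 := by
      rw [hu]; field_simp
    have hWij : W i j = σ^2 * (Real.exp u - 1 - u) := by
      simp only [hW, Matrix.sub_apply, Matrix.smul_apply, Matrix.of_apply,
        hMr, hMc, smul_eq_mul, hKG, hKlin]
      have : Real.exp (-(∑ k, (x i k - x j k) ^ 2) / (2 * σ ^ 2)) = Real.exp u := by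
        rw [hu, hD]
      rw [this]
      have h2 : (∑ k, x i k * x j k) = (a i + a j - D)/2 := by
        rw [hDsum]; ring
      rw [h2]
      nlinarith [hσu]
    have hu1 : |u| ≤ 1 := by
      rw [hu, abs_div, abs_neg, abs_of_nonneg hD0, abs_of_pos (by positivity : (0:ℝ) < 2*σ^2)]
      rw [div_le_one (by positivity)]
      linarith
    have hexp := Real.abs_exp_sub_one_sub_id_le hu1
    have hu2 : u^2 ≤ S^2/(4*σ^4) := by
      have h1 : |u| ≤ S/(2*σ^2) := by
        rw [hu, abs_div, abs_neg, abs_of_nonneg hD0,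
          abs_of_pos (by positivity : (0:ℝ) < 2*σ^2)]
        apply div_le_div_of_nonneg_right ?_ (by positivity)
        · exact hDS
      have := mul_self_le_mul_self (abs_nonneg u) h1
      calc u^2 = |u| * |u| := by rw [sq, ← abs_mul_abs_self]
        _ ≤ (S/(2*σ^2)) * (S/(2*σ^2)) := this
        _ = S^2/(4*σ^4) := by ring
    rw [hWij, abs_mul, abs_of_nonneg (sq_nonneg σ)]
    calc σ^2 * |Real.exp u - 1 - u| ≤ σ^2 * u^2 := by
          apply mul_le_mul_of_nonneg_left hexp (sq_nonneg σ)
      _ ≤ σ^2 * (S^2/(4*σ^4)) := by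
          apply mul_le_mul_of_nonneg_left hu2 (sq_nonneg σ)
      _ = S^2/(4*σ^2) := by field_simp
  -- Step B: H W H equals the difference
  have h1 : H * (Matrix.of fun _ _ => (1:ℝ)) = 0 := H_mul_colConst hN (fun _ => 1)
  have h2 : H * Mc = 0 := H_mul_colConst hN _
  have h3 : Mr * H = 0 := rowConst_mul_H hN _
  have stepB : H * W * H = σ^2 • (H * KG σ * H) - H * Klin * H := by
    have e1 : H * W = σ^2 • (H * KG σ) - H * Klin - H * Mr := by
      simp only [hW, Matrix.mul_sub, Matrix.mul_smul, h1, h2, smul_zero, sub_zero]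
    rw [e1]
    simp only [Matrix.sub_mul, Matrix.smul_mul, Matrix.mul_assoc, h3, Matrix.mul_zero,
      sub_zero]
  -- Step C: triple product bound
  intro i j
  rw [← stepB]
  have hWb : ∀ k l, |W k l| ≤ S^2/(4*σ^2) := stepA
  have hHb : ∀ k l, |H k l| ≤ 2 := H_abs_le hN
  have hHW : ∀ l, |(H * W) i l| ≤ (N:ℝ) * (2 * (S^2/(4*σ^2))) := by
    intro l
    rw [Matrix.mul_apply]
    calc |∑ k, H i k * W k l| ≤ ∑ k, |H i k * W k l| := Finset.abs_sum_le_sum_abs _ _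
      _ ≤ ∑ _k : Fin N, 2 * (S^2/(4*σ^2)) := by
          refine Finset.sum_le_sum (fun k _ => ?_)
          rw [abs_mul]
          exact mul_le_mul (hHb i k) (hWb k l) (abs_nonneg _) (by norm_num)
      _ = (N:ℝ) * (2 * (S^2/(4*σ^2))) := by
          simp [Finset.sum_const, Finset.card_univ, nsmul_eq_mul]
  have : |(H * W * H) i j| ≤ (N:ℝ) * (((N:ℝ) * (2 * (S^2/(4*σ^2)))) * 2) := by
    rw [Matrix.mul_apply]
    calc |∑ l, (H * W) i l * H l j| ≤ ∑ l, |(H * W) i l * H l j| :=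
          Finset.abs_sum_le_sum_abs _ _
      _ ≤ ∑ _l : Fin N, ((N:ℝ) * (2 * (S^2/(4*σ^2)))) * 2 := by
          refine Finset.sum_le_sum (fun l _ => ?_)
          rw [abs_mul]
          apply mul_le_mul (hHW l) (hHb l j) (abs_nonneg _)
          positivity
      _ = (N:ℝ) * (((N:ℝ) * (2 * (S^2/(4*σ^2)))) * 2) := by
          simp [Finset.sum_const, Finset.card_univ, nsmul_eq_mul]
  refine le_trans this (le_of_eq ?_)
  field_simp
  ring

end CKAhelper

open CKAhelper in
/-- With two Gaussian kernels, `CKA(K_{G(σ₁)}(X), L_{G(σ₂)}(Y))` converges to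
`CKA(K_lin(X), L_lin(Y))` as `min(σ₁,σ₂) → ∞`, with error `O(1/min(σ₁,σ₂)²)`. -/
theorem two_gaussian_cka_tendsto_linear_cka
    (N p q : ℕ) (hN : 0 < N)
    (x : Fin N → Fin p → ℝ) (y : Fin N → Fin q → ℝ)
    (KG LG : ℝ → Matrix (Fin N) (Fin N) ℝ)
    (hKG : ∀ σ i j, KG σ i j =
      Real.exp (-(∑ k, (x i k - x j k) ^ 2) / (2 * σ ^ 2)))
    (hLG : ∀ σ i j, LG σ i j =
      Real.exp (-(∑ k, (y i k - y j k) ^ 2) / (2 * σ ^ 2)))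
    (KlinX KlinY : Matrix (Fin N) (Fin N) ℝ)
    (hKlinX : ∀ i j, KlinX i j = ∑ k, x i k * x j k)
    (hKlinY : ∀ i j, KlinY i j = ∑ k, y i k * y j k)
    (hX : 0 < Matrix.trace
      ((centeringMatrix N * KlinX) * (centeringMatrix N * KlinX)))
    (hY : 0 < Matrix.trace
      ((centeringMatrix N * KlinY) * (centeringMatrix N * KlinY))) :
    ∃ C σ₀ : ℝ, 0 < C ∧ 0 < σ₀ ∧ ∀ σ₁ σ₂ : ℝ, σ₀ ≤ σ₁ → σ₀ ≤ σ₂ →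
      |CKA0 N (KG σ₁) (LG σ₂) - CKA0 N KlinX KlinY| ≤ C / (min σ₁ σ₂) ^ 2 := by
  classical
  set H := centeringMatrix N with hH
  obtain ⟨SX, hSX0, hSXb⟩ : ∃ S : ℝ, 0 ≤ S ∧ ∀ i j, (∑ k, (x i k - x j k)^2) ≤ S := by
    refine ⟨∑ i, ∑ j, ∑ k, (x i k - x j k)^2, by positivity, fun i j => ?_⟩
    calc (∑ k, (x i k - x j k)^2)
        ≤ ∑ j', ∑ k, (x i k - x j' k)^2 :=
          Finset.single_le_sum (f := fun j' => ∑ k, (x i k - x j' k)^2)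
            (fun j' _ => by positivity) (Finset.mem_univ j)
      _ ≤ _ :=
          Finset.single_le_sum (f := fun i' => ∑ j', ∑ k, (x i' k - x j' k)^2)
            (fun i' _ => by positivity) (Finset.mem_univ i)
  obtain ⟨SY, hSY0, hSYb⟩ : ∃ S : ℝ, 0 ≤ S ∧ ∀ i j, (∑ k, (y i k - y j k)^2) ≤ S := by
    refine ⟨∑ i, ∑ j, ∑ k, (y i k - y j k)^2, by positivity, fun i j => ?_⟩
    calc (∑ k, (y i k - y j k)^2)
        ≤ ∑ j', ∑ k, (y i k - y j' k)^2 :=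
          Finset.single_le_sum (f := fun j' => ∑ k, (y i k - y j' k)^2)
            (fun j' _ => by positivity) (Finset.mem_univ j)
      _ ≤ _ :=
          Finset.single_le_sum (f := fun i' => ∑ j', ∑ k, (y i' k - y j' k)^2)
            (fun i' _ => by positivity) (Finset.mem_univ i)
  set z₀ : (Fin N → Fin N → ℝ) × (Fin N → Fin N → ℝ) :=
    (Matrix.of.symm (H * KlinX * H), Matrix.of.symm (H * KlinY * H)) with hz₀
  have hpos : 0 < Matrix.trace (Matrix.of z₀.1 * Matrix.of z₀.1) *
      Matrix.trace (Matrix.of z₀.2 * Matrix.of z₀.2) := by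
    have e1 : (Matrix.of z₀.1 : Matrix (Fin N) (Fin N) ℝ) = H * KlinX * H := rfl
    have e2 : (Matrix.of z₀.2 : Matrix (Fin N) (Fin N) ℝ) = H * KlinY * H := rfl
    rw [e1, e2, ← trace_HH hN, ← trace_HH hN]
    exact mul_pos hX hY
  obtain ⟨Kc, t, ht, hlip⟩ := (Fc_contDiffAt N z₀ hpos).exists_lipschitzOnWith
  obtain ⟨ε, hε, hball⟩ := Metric.mem_nhds_iff.mp ht
  set CB : ℝ := (N:ℝ)^2 * SX^2 + (N:ℝ)^2 * SY^2 with hCB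
  have hCB0 : 0 ≤ CB := by positivity
  set σ₀ : ℝ := Real.sqrt (SX/2) + Real.sqrt (SY/2) + Real.sqrt ((CB+1)/ε) + 1 with hσ₀
  have hsqX : (0:ℝ) ≤ Real.sqrt (SX/2) := Real.sqrt_nonneg _
  have hsqY : (0:ℝ) ≤ Real.sqrt (SY/2) := Real.sqrt_nonneg _
  have hsqE : (0:ℝ) ≤ Real.sqrt ((CB+1)/ε) := Real.sqrt_nonneg _
  have hσ₀1 : 1 ≤ σ₀ := by rw [hσ₀]; linarith
  have hσ₀pos : 0 < σ₀ := lt_of_lt_of_le one_pos hσ₀1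
  refine ⟨(Kc:ℝ) * CB + 1, σ₀, by positivity, hσ₀pos, ?_⟩
  intro σ₁ σ₂ h₁ h₂
  set m := min σ₁ σ₂ with hm
  have hmσ₁ : m ≤ σ₁ := min_le_left _ _
  have hmσ₂ : m ≤ σ₂ := min_le_right _ _
  have hm0 : σ₀ ≤ m := le_min h₁ h₂
  have hm1 : 1 ≤ m := le_trans hσ₀1 hm0
  have hmpos : 0 < m := lt_of_lt_of_le one_pos hm1
  have hσ₁1 : 1 ≤ σ₁ := le_trans hm1 hmσ₁
  have hσ₂1 : 1 ≤ σ₂ := le_trans hm1 hmσ₂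
  have hσ₁pos : 0 < σ₁ := lt_of_lt_of_le one_pos hσ₁1
  have hσ₂pos : 0 < σ₂ := lt_of_lt_of_le one_pos hσ₂1
  -- σ₁² ≥ SX/2 etc.
  have hsq : ∀ s σ' : ℝ, 0 ≤ s → Real.sqrt (s/2) ≤ σ' → s ≤ 2 * σ'^2 := by
    intro s σ' hs hle
    have h2 := pow_le_pow_left₀ (Real.sqrt_nonneg (s/2)) hle 2
    rw [Real.sq_sqrt (by positivity : (0:ℝ) ≤ s/2)] at h2
    linarith
  have hX2 : SX ≤ 2 * σ₁^2 := hsq SX σ₁ hSX0 (by rw [hσ₀] at h₁; linarith)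
  have hY2 : SY ≤ 2 * σ₂^2 := hsq SY σ₂ hSY0 (by rw [hσ₀] at h₂; linarith)
  have hb1 := key_bound hN x KG hKG KlinX hKlinX SX hSXb σ₁ hσ₁1 hX2
  have hb2 := key_bound hN y LG hLG KlinY hKlinY SY hSYb σ₂ hσ₂1 hY2
  set z : (Fin N → Fin N → ℝ) × (Fin N → Fin N → ℝ) :=
    (σ₁^2 • Matrix.of.symm (H * KG σ₁ * H), σ₂^2 • Matrix.of.symm (H * LG σ₂ * H))
    with hz
  -- value identifications
  have hval1 : CKA0 N (KG σ₁) (LG σ₂) = Fc N z := by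
    rw [CKA0_eq_Fc hN (KG σ₁) (LG σ₂), hz, Fc_smul N (σ₁^2) (σ₂^2)
      (by positivity) (by positivity)]
  have hval0 : CKA0 N KlinX KlinY = Fc N z₀ := CKA0_eq_Fc hN KlinX KlinY
  -- distance bound
  have hdistb : dist z z₀ ≤ CB / m^2 := by
    have hCBm : (0:ℝ) ≤ CB / m^2 := by positivity
    rw [Prod.dist_eq]
    apply max_le
    · rw [dist_eq_norm]
      rw [pi_norm_le_iff_of_nonneg hCBm]
      intro i
      rw [pi_norm_le_iff_of_nonneg hCBm]
      intro j
      rw [Real.norm_eq_abs]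
      have h1 : |(σ₁^2 • (H * KG σ₁ * H) - H * KlinX * H) i j| ≤
          (N:ℝ)^2 * SX^2 / σ₁^2 := hb1 i j
      refine le_trans h1 ?_
      apply div_le_div₀ hCB0 ?_ (by positivity) (pow_le_pow_left₀ hmpos.le hmσ₁ 2)
      · rw [hCB]
        have hy : (0:ℝ) ≤ (N:ℝ)^2*SY^2 := by positivity
        linarith
    · rw [dist_eq_norm]
      rw [pi_norm_le_iff_of_nonneg hCBm]
      intro i
      rw [pi_norm_le_iff_of_nonneg hCBm]
      intro j
      rw [Real.norm_eq_abs]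
      have h1 : |(σ₂^2 • (H * LG σ₂ * H) - H * KlinY * H) i j| ≤
          (N:ℝ)^2 * SY^2 / σ₂^2 := hb2 i j
      refine le_trans h1 ?_
      apply div_le_div₀ hCB0 ?_ (by positivity) (pow_le_pow_left₀ hmpos.le hmσ₂ 2)
      · rw [hCB]
        have hx : (0:ℝ) ≤ (N:ℝ)^2*SX^2 := by positivity
        linarith
  -- membership in the Lipschitz set
  have hσ₀sq : (CB + 1) / ε < σ₀^2 := by
    have h2 : Real.sqrt ((CB+1)/ε) < σ₀ := by rw [hσ₀]; linarith
    have h3 := pow_lt_pow_left₀ h2 hsqE (two_ne_zero)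
    rwa [Real.sq_sqrt (by positivity : (0:ℝ) ≤ (CB+1)/ε)] at h3
  have hlt : CB / m^2 < ε := by
    have hm2 : σ₀^2 ≤ m^2 := pow_le_pow_left₀ hσ₀pos.le hm0 2
    have : (CB + 1)/ε < m^2 := lt_of_lt_of_le hσ₀sq hm2
    rw [div_lt_iff₀ (by positivity)]
    rw [div_lt_iff₀ hε] at this
    linarith
  have hz_mem : z ∈ t := hball (by
    rw [Metric.mem_ball]
    exact lt_of_le_of_lt hdistb hlt)
  have hz₀_mem : z₀ ∈ t := hball (Metric.mem_ball_self hε)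
  -- conclude
  have hfinal := hlip.dist_le_mul z hz_mem z₀ hz₀_mem
  rw [hval1, hval0, ← Real.dist_eq]
  calc dist (Fc N z) (Fc N z₀) ≤ (Kc:ℝ) * dist z z₀ := hfinal
    _ ≤ (Kc:ℝ) * (CB / m^2) := by
        apply mul_le_mul_of_nonneg_left hdistb Kc.coe_nonneg
    _ ≤ ((Kc:ℝ) * CB + 1) / m^2 := by
        rw [mul_div_assoc']
        exact (div_le_div_iff_of_pos_right (by positivity)).mpr (by linarith)
end

section
/- Non-centered Gaussian kernel alignment does not converge to non-centered linear alignment: for X = [[1,0],[0,1]] and Y = [[1,0],[1,1]], the non-centered linear alignment tr(K_lin·L_lin)/√(tr(K_lin²)·tr(L_lin²)) equals 3/√14, while for every bandwidth σ > 0 the non-centered Gaussian alignment (with distances scaled by the median pairwise distance of each representation) equals 1. -/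
open Matrix

/-- The feature matrix `X = [[1,0],[0,1]]`. -/
noncomputable def Xmat : Matrix (Fin 2) (Fin 2) ℝ := !![1, 0; 0, 1]

/-- The feature matrix `Y = [[1,0],[1,1]]`. -/
noncomputable def Ymat : Matrix (Fin 2) (Fin 2) ℝ := !![1, 0; 1, 1]

/-- Median pairwise row distance of `X` (including diagonal zeros). -/
noncomputable def dX : ℝ := Real.sqrt 2 / 2

/-- Median pairwise row distance of `Y` (including diagonal zeros). -/
noncomputable def dY : ℝ := 1 / 2

/-- Gaussian Gram matrix of `X` with median-scaled bandwidth `d_X·σ`. -/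
noncomputable def gaussX (σ : ℝ) : Matrix (Fin 2) (Fin 2) ℝ :=
  Matrix.of fun i j =>
    Real.exp (-(∑ k, (Xmat i k - Xmat j k) ^ 2) / (2 * (dX * σ) ^ 2))

/-- Gaussian Gram matrix of `Y` with median-scaled bandwidth `d_Y·σ`. -/
noncomputable def gaussY (σ : ℝ) : Matrix (Fin 2) (Fin 2) ℝ :=
  Matrix.of fun i j =>
    Real.exp (-(∑ k, (Ymat i k - Ymat j k) ^ 2) / (2 * (dY * σ) ^ 2))

/-- Non-centered alignment `tr(A·B)/√(tr(A²)·tr(B²))`. -/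
noncomputable def align (A B : Matrix (Fin 2) (Fin 2) ℝ) : ℝ :=
  Matrix.trace (A * B) /
    Real.sqrt (Matrix.trace (A * A) * Matrix.trace (B * B))

lemma gauss_eq (σ : ℝ) : gaussX σ = gaussY σ := by
  have h2 : (Real.sqrt 2) ^ 2 = 2 := Real.sq_sqrt (by norm_num)
  ext i j
  fin_cases i <;> fin_cases j <;>
    simp [gaussX, gaussY, Xmat, Ymat, dX, dY, Fin.sum_univ_two] <;>
    rw [mul_pow, mul_pow] <;> rw [div_pow] <;> rw [h2] <;> ring_nf

lemma align_self (A : Matrix (Fin 2) (Fin 2) ℝ) (h : 0 < Matrix.trace (A * A)) :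
    align A A = 1 := by
  unfold align
  rw [show Matrix.trace (A*A) * Matrix.trace (A*A) = (Matrix.trace (A*A))^2 by ring,
    Real.sqrt_sq h.le, div_self h.ne']

/-- The non-centered linear alignment of `X`, `Y` equals `3/√14`, while the
non-centered Gaussian alignment equals `1` for every bandwidth `σ > 0`; hence
non-centered Gaussian alignment does not converge to the linear one. -/
theorem noncentered_alignment_counterexample :
    align (Xmat * Xmatᵀ) (Ymat * Ymatᵀ) = 3 / Real.sqrt 14 ∧
      ∀ σ : ℝ, 0 < σ → align (gaussX σ) (gaussY σ) = 1 := by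
  constructor
  · have hX : Xmat * Xmatᵀ = !![(1:ℝ),0;0,1] := by
      ext i j
      fin_cases i <;> fin_cases j <;>
        norm_num [Xmat, Matrix.mul_apply, Fin.sum_univ_two, Matrix.transpose_apply, Matrix.vecHead, Matrix.vecTail]
    have hY : Ymat * Ymatᵀ = !![(1:ℝ),1;1,2] := by
      ext i j
      fin_cases i <;> fin_cases j <;>
        norm_num [Ymat, Matrix.mul_apply, Fin.sum_univ_two, Matrix.transpose_apply, Matrix.vecHead, Matrix.vecTail]
    rw [align, hX, hY]
    norm_num [Matrix.trace_fin_two, Matrix.mul_apply, Fin.sum_univ_two]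
  · intro σ hσ
    rw [← gauss_eq]
    apply align_self
    simp only [Matrix.trace, Matrix.mul_apply, Matrix.diag, Fin.sum_univ_two,
      gaussX, Matrix.of_apply]
    positivity
end
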